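/- Let g: ℤ×ℤ → ℤ satisfy the functional equation g(x,y)g(y,z) = g(x,w)g(w,z) for all x, y, z, w ∈ ℤ. If g is not semi-trivial, then there exist a constant c ∈ ℤ and a function h: ℤ → ℤ∖{0} such that g(x,y) = c·h(x)/h(y) for all x, y (in particular h(y) divides c·h(x) for all x, y). -/

import Mathlib

/-!
If `g` is not semi-trivial, some `t` has a nonzero row entry `g t a` and a nonzero column entry
`g b t`. The functional equation makes `g b w * g w a = g b t * g t a ≠ 0` for every `w`, so
`h := g (·) a` never vanishes, and the equation with `w = a` reads `g x y * h y = g a a * h x`.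
-/

/-- `g : ℤ×ℤ → ℤ` is semi-trivial if there are sets `A, B ⊆ ℤ` with `A ∪ B = ℤ`
such that `g(x,y) = 0` whenever `x ∈ A` or `y ∈ B`. -/
def SemiTrivial (g : ℤ → ℤ → ℤ) : Prop :=
  ∃ A B : Set ℤ, A ∪ B = Set.univ ∧
    (∀ x y : ℤ, x ∈ A → g x y = 0) ∧ (∀ x y : ℤ, y ∈ B → g x y = 0)

theorem exists_mul_ne_zero_of_not_semiTrivial {g : ℤ → ℤ → ℤ} (hns : ¬ SemiTrivial g) :
    ∃ b t a, g b t * g t a ≠ 0 := by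
  by_contra! h
  refine hns ⟨{x | ∀ y, g x y = 0}, {y | ∀ x, g x y = 0}, ?_,
    fun x y hx => hx y, fun x y hy => hy x⟩
  refine Set.eq_univ_of_forall fun t => ?_
  by_contra ht
  simp only [Set.mem_union, Set.mem_ofPred_eq, not_or, not_forall] at ht
  obtain ⟨⟨a, hta⟩, ⟨b, hbt⟩⟩ := ht
  exact mul_ne_zero hbt hta (h b t a)

theorem column_ne_zero_of_mul_ne_zero {ι M : Type*} [MonoidWithZero M] [NoZeroDivisors M]
    {g : ι → ι → M} (hg : ∀ x y z w, g x y * g y z = g x w * g w z) {b t a : ι}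
    (hbta : g b t * g t a ≠ 0) (w : ι) : g w a ≠ 0 :=
  right_ne_zero_of_mul (by rwa [← hg b t a w])

/-- if `g` satisfies `g(x,y)g(y,z) = g(x,w)g(w,z)` for all `x,y,z,w` and
is not semi-trivial, then there are a constant `c` and a nowhere-zero `h : ℤ → ℤ` with
`g(x,y) = c·h(x)/h(y)` for all `x, y` (in particular `h(y) ∣ c·h(x)`). -/
theorem stmt4 (g : ℤ → ℤ → ℤ)
    (hg : ∀ x y z w : ℤ, g x y * g y z = g x w * g w z)
    (hns : ¬ SemiTrivial g) :
    ∃ (c : ℤ) (h : ℤ → ℤ), (∀ y, h y ≠ 0) ∧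
      ∀ x y : ℤ, h y ∣ c * h x ∧ g x y = c * h x / h y := by
  obtain ⟨b, t, a, hbta⟩ := exists_mul_ne_zero_of_not_semiTrivial hns
  have hcol := column_ne_zero_of_mul_ne_zero hg hbta
  refine ⟨g a a, fun y => g y a, hcol, fun x y => ?_⟩
  have hxy : g a a * g x a = g x y * g y a := by rw [hg x y a a, mul_comm]
  exact ⟨⟨g x y, by rw [hxy, mul_comm]⟩, by rw [hxy, Int.mul_ediv_cancel _ (hcol y)]⟩
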